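/- Let (A, ·, ω) be a simple n-Lie Poisson algebra over a field of characteristic zero with 1 ∈ A, and let U be an ideal of the n-Lie algebra A⁽¹⁾ with U⁽³⁾ = 0. Then ω(A, …, A, U) = 0; that is, every solvable (of derived length ≤ 3) ideal of A⁽¹⁾ lies in the center of the n-Lie algebra (A, ω). -/
import Mathlib


/-- The derived ideal A⁽¹⁾ = span of all brackets ω(A,…,A). -/
def bracketSpan (F : Type*) [Field F] (A : Type*) [CommRing A] [Algebra F A]
    {m : ℕ} (ω : A [⋀^Fin (m + 2)]→ₗ[F] A) : Submodule F A :=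
  Submodule.span F (Set.range ⇑ω)

/-- One step of the derived series: the span of brackets of elements of V. -/
def derived (F : Type*) [Field F] (A : Type*) [CommRing A] [Algebra F A]
    {m : ℕ} (ω : A [⋀^Fin (m + 2)]→ₗ[F] A) (V : Submodule F A) : Submodule F A :=
  Submodule.span F {x | ∃ v : Fin (m + 2) → A, (∀ i, v i ∈ V) ∧ ω v = x}

section Aux

variable {F : Type*} [Field F] {A : Type*} [CommRing A] [Algebra F A]
  {m : ℕ} (ω : A [⋀^Fin (m + 2)]→ₗ[F] A)

/-- The bracket with fixed last `m+1` arguments, as a linear map. -/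
def deltaL (w : Fin (m + 1) → A) : A →ₗ[F] A where
  toFun x := ω (Fin.cons x w)
  map_add' x y := by
    have h := ω.map_update_add (Fin.cons x w) 0 x y
    simpa [Fin.update_cons_zero] using h
  map_smul' c x := by
    have h := ω.map_update_smul (Fin.cons x w) 0 c x
    simpa [Fin.update_cons_zero] using h

@[simp] lemma deltaL_apply (w : Fin (m + 1) → A) (x : A) :
    deltaL ω w x = ω (Fin.cons x w) := rfl

/-- The bracket with fixed last `m+1` arguments, as a derivation. -/
def delta (hLeib : ∀ (a b : A) (u : Fin (m + 1) → A),
      ω (Fin.cons (a * b) u) = a * ω (Fin.cons b u) + ω (Fin.cons a u) * b)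
    (w : Fin (m + 1) → A) : Derivation F A A :=
  Derivation.mk' (deltaL ω w) (fun a b => by
    simp only [deltaL_apply, smul_eq_mul]
    rw [hLeib a b w]; ring)

@[simp] lemma delta_apply (hLeib : ∀ (a b : A) (u : Fin (m + 1) → A),
      ω (Fin.cons (a * b) u) = a * ω (Fin.cons b u) + ω (Fin.cons a u) * b)
    (w : Fin (m + 1) → A) (x : A) :
    delta ω hLeib w x = ω (Fin.cons x w) := rfl

/-- Pulling the `i`-th entry of the tail to the front changes the sign. -/
lemma pull (x : A) (w : Fin (m + 1) → A) (i : Fin (m + 1)) :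
    ω (Fin.cons x w) = - ω (Fin.cons (w i) (Function.update w i x)) := by
  have key : Fin.cons (w i) (Function.update w i x)
      = (Fin.cons x w : Fin (m + 2) → A) ∘ (Equiv.swap 0 i.succ) := by
    funext j
    rcases Fin.eq_zero_or_eq_succ j with h | ⟨k, rfl⟩
    · subst h
      simp [Equiv.swap_apply_left]
    · by_cases hk : k = i
      · subst hk
        simp [Equiv.swap_apply_right]
      · have h1 : (k.succ : Fin (m + 2)) ≠ 0 := Fin.succ_ne_zero k
        have h2 : (k.succ : Fin (m + 2)) ≠ i.succ := by
          simpa using (Fin.succ_injective _).ne hk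
        simp [Equiv.swap_apply_of_ne_of_ne h1 h2, Function.update_of_ne hk]
  rw [key, AlternatingMap.map_swap ω _ (Fin.succ_ne_zero i).symm, neg_neg]

end Aux

section Der


variable {F : Type*} [Field F] [CharZero F] {A : Type*} [CommRing A] [Algebra F A]

lemma nat_cancel (F : Type*) [Field F] [CharZero F] {A : Type*} [CommRing A] [Algebra F A]
    (n : ℕ) (hn : n ≠ 0) {y : A} (h : n • y = 0) : y = 0 := by
  have h2 : ((n : F)) • y = 0 := by rw [Nat.cast_smul_eq_nsmul]; exact h
  have h3 := congrArg (fun z => ((n : F))⁻¹ • z) h2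
  simpa [smul_smul, inv_mul_cancel₀ (show ((n : F)) ≠ 0 from Nat.cast_ne_zero.2 hn)] using h3

lemma pow_formula (D : Derivation F A A) (b : A) (hb : D (D b) = 0) :
    ∀ n j, j ≤ n → (⇑D)^[j] (b ^ n) = (n.descFactorial j) • (b ^ (n - j) * (D b) ^ j) := by
  intro n j
  induction j with
  | zero => intro _; simp
  | succ j IH =>
    intro hj
    rw [Function.iterate_succ_apply', IH (Nat.le_of_succ_le hj), map_nsmul]
    rw [Derivation.leibniz, Derivation.leibniz_pow, Derivation.leibniz_pow, hb]
    simp only [smul_zero, smul_eq_mul, nsmul_eq_mul, Nat.descFactorial_succ, Nat.cast_mul,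
      Nat.sub_sub, pow_succ, mul_zero, add_zero, zero_add]
    ring

lemma derivation_eq_zero_of_iterate [IsReduced A] (D : Derivation F A A) :
    ∀ N, (∀ x, (⇑D)^[N] x = 0) → ∀ x, D x = 0 := by
  intro N
  induction N with
  | zero =>
    intro h x
    have h0 := h x
    simp only [Function.iterate_zero, id_eq] at h0
    rw [h0]; exact map_zero D
  | succ N ih =>
    intro h
    rcases Nat.eq_zero_or_pos N with rfl | hN
    · intro x; simpa using h x
    · apply ih
      intro x
      obtain ⟨K, rfl⟩ := Nat.exists_eq_add_of_le hN
      set b := (⇑D)^[K] x with hbdef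
      have hDb : (⇑D)^[1 + K] x = D b := by
        rw [add_comm, Function.iterate_succ_apply']
      have hb : D (D b) = 0 := by
        have := h x
        rwa [show 1 + K + 1 = (1 + K) + 1 from rfl, Function.iterate_succ_apply', hDb] at this
      have hkey := pow_formula D b hb (1 + K + 1) (1 + K + 1) le_rfl
      rw [h (b ^ (1 + K + 1))] at hkey
      have h5 : (D b) ^ (1 + K + 1) = 0 := by
        have h6 := nat_cancel F _ (Nat.factorial_ne_zero (1 + K + 1))
          (y := b ^ (1 + K + 1 - (1 + K + 1)) * (D b) ^ (1 + K + 1))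
          (by rw [← Nat.descFactorial_self]; exact hkey.symm)
        simpa using h6
      rw [hDb]
      exact IsReduced.eq_zero _ ⟨_, h5⟩

lemma derivation_nilpotent (D : Derivation F A A) {a : A} (ha : IsNilpotent a) :
    IsNilpotent (D a) := by
  obtain ⟨M, hM⟩ := ha
  rcases Nat.eq_zero_or_pos M with rfl | hM1
  · have h1 : (1 : A) = 0 := by simpa using hM
    exact ⟨1, by simpa using congrArg (· * D a) h1⟩
  have base : a ^ (M - 1) * D a = 0 := by
    have h0 : D (a ^ M) = 0 := by rw [hM, map_zero]
    rw [Derivation.leibniz_pow] at h0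
    exact nat_cancel F M hM1.ne' (by simpa [smul_eq_mul] using h0)
  have key : ∀ k, 1 ≤ k → k ≤ M → a ^ (M - k) * (D a) ^ (2 * k - 1) = 0 := by
    intro k
    induction k with
    | zero => omega
    | succ k IH =>
      intro _ hk
      rcases Nat.eq_zero_or_pos k with rfl | hk1
      · simpa using base
      have h1 := IH hk1 (by omega)
      have h2 : D (a ^ (M - k) * (D a) ^ (2 * k - 1)) = 0 := by rw [h1, map_zero]
      rw [Derivation.leibniz, Derivation.leibniz_pow, Derivation.leibniz_pow] at h2
      have h3 := congrArg (· * D a) h2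
      simp only [smul_eq_mul, nsmul_eq_mul, zero_mul] at h3
      have e1 : M - k = (M - (k + 1)) + 1 := by omega
      have e4 : M - k - 1 = M - (k + 1) := by omega
      have e5 : 2 * k - 1 = (2 * k - 2) + 1 := by omega
      have e7 : 2 * k - 1 - 1 = 2 * k - 2 := by omega
      have e6 : 2 * (k + 1) - 1 = (2 * k - 2) + 3 := by omega
      rw [e1, e5] at h1
      rw [e4, e7, e1, e5] at h3
      have h4 : (M - k) • (a ^ (M - (k + 1)) * (D a) ^ (2 * (k + 1) - 1)) = 0 := by
        rw [nsmul_eq_mul, e6, e1]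
        linear_combination h3 - ((2 * k - 2 + 1 : ℕ) : A) * D (D a) * h1
      have h5 := nat_cancel F (M - k) (by omega) h4
      exact h5
  have hfin := key M hM1 le_rfl
  exact ⟨2 * M - 1, by simpa using hfin⟩


end Der

section Main

variable {F : Type*} [Field F] [CharZero F] {A : Type*} [CommRing A] [Algebra F A] {m : ℕ}

set_option maxHeartbeats 1000000 in
lemma lemmaM [IsReduced A] (ω : A [⋀^Fin (m + 2)]→ₗ[F] A)
    (hLeib : ∀ (a b : A) (u : Fin (m + 1) → A),
      ω (Fin.cons (a * b) u) = a * ω (Fin.cons b u) + ω (Fin.cons a u) * b)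
    (V : Submodule F A) (hVle : V ≤ bracketSpan F A ω)
    (hVideal : ∀ u ∈ V, ∀ v : Fin (m + 1) → A,
      (∀ i, v i ∈ bracketSpan F A ω) → ω (Fin.cons u v) ∈ V)
    (hVder : ∀ vv : Fin (m + 2) → A, (∀ i, vv i ∈ V) →
      ∀ w : Fin (m + 1) → A, ω (Fin.cons (ω vv) w) = 0) :
    ∀ u ∈ V, ∀ w : Fin (m + 1) → A, ω (Fin.cons u w) = 0 := by
  have hEB : ∀ (w : Fin (m + 1) → A) (x : A), ω (Fin.cons x w) ∈ bracketSpan F A ω :=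
    fun w x => Submodule.subset_span ⟨_, rfl⟩
  have hBV : ∀ (w : Fin (m + 1) → A), (∀ i, w i ∈ bracketSpan F A ω) →
      ∀ i₀, w i₀ ∈ V → ∀ g ∈ bracketSpan F A ω, ω (Fin.cons g w) ∈ V := by
    intro w hwB i₀ hi₀ g hg
    have hle : Submodule.span F (Set.range ⇑ω) ≤ V.comap (deltaL ω w) := by
      refine Submodule.span_le.2 ?_
      rintro _ ⟨y, rfl⟩
      simp only [SetLike.mem_coe, Submodule.mem_comap, deltaL_apply]
      rw [pull ω (ω y) w i₀]
      refine neg_mem (hVideal _ hi₀ _ ?_)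
      intro j
      by_cases hj : j = i₀
      · subst hj
        rw [Function.update_self]
        exact Submodule.subset_span ⟨y, rfl⟩
      · simpa [Function.update_of_ne hj] using hwB j
    exact hle hg
  -- Phase 1: at least m+1-d of the tail entries in V, all in bracketSpan
  have P1 : ∀ d, d ≤ m → ∀ (w : Fin (m + 1) → A), (∀ i, w i ∈ bracketSpan F A ω) →
      ∀ s : Finset (Fin (m + 1)), m + 1 - d ≤ s.card → (∀ i ∈ s, w i ∈ V) →
      ∀ x : A, ω (Fin.cons x w) = 0 := by
    intro d
    induction d with
    | zero =>
      intro _ w hwB s hcard hsV x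
      have hall : ∀ i, w i ∈ V := by
        intro i
        apply hsV
        have hcu : s.card = Fintype.card (Fin (m + 1)) := by
          refine le_antisymm (Finset.card_le_univ s) ?_
          simpa using hcard
        rw [Finset.eq_univ_of_card s hcu]
        exact Finset.mem_univ i
      set E := delta ω hLeib w with hE
      have h4 : ∀ y, (⇑E)^[4] y = 0 := by
        intro y
        have h2 : E (E y) ∈ V := hBV w (fun i => hVle (hall i)) 0 (hall 0) _ (hEB w y)
        have hvv : ∀ i, (Fin.cons (E (E y)) w : Fin (m + 2) → A) i ∈ V := by
          intro i
          refine Fin.cases ?_ ?_ i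
          · simpa using h2
          · intro j; simpa using hall j
        show E (E (E (E y))) = 0
        exact hVder _ hvv w
      exact derivation_eq_zero_of_iterate E 4 h4 x
    | succ d ih =>
      intro hd w hwB s hcard hsV x
      by_cases hbig : m + 1 - d ≤ s.card
      · exact ih (by omega) w hwB s hbig hsV x
      · obtain ⟨i₀, hi₀⟩ : ∃ i, i ∈ s := Finset.card_pos.mp (by omega)
        obtain ⟨i₁, hi₁⟩ : ∃ i, i ∉ s := by
          by_contra hc
          push_neg at hc
          have hs : s = Finset.univ := Finset.eq_univ_iff_forall.2 hc
          rw [hs, Finset.card_univ, Fintype.card_fin] at hbig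
          omega
        set E := delta ω hLeib w with hE
        have hV0 : ∀ v ∈ V, ω (Fin.cons v w) = 0 := by
          intro v hv
          rw [pull ω v w i₁]
          have hB' : ∀ i, Function.update w i₁ v i ∈ bracketSpan F A ω := by
            intro i
            by_cases hi : i = i₁
            · subst hi; simpa using hVle hv
            · simpa [Function.update_of_ne hi] using hwB i
          have hsV' : ∀ i ∈ insert i₁ s, Function.update w i₁ v i ∈ V := by
            intro i hi
            rcases Finset.mem_insert.mp hi with rfl | his
            · simpa using hv
            · have hne : i ≠ i₁ := fun hEq => hi₁ (hEq ▸ his)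
              simpa [Function.update_of_ne hne] using hsV i his
          rw [ih (by omega) _ hB' (insert i₁ s)
            (by rw [Finset.card_insert_of_notMem hi₁]; omega) hsV' (w i₁), neg_zero]
        have h3 : ∀ y, (⇑E)^[3] y = 0 := by
          intro y
          have h2 : E (E y) ∈ V := hBV w hwB i₀ (hsV _ hi₀) _ (hEB w y)
          show E (E (E y)) = 0
          exact hV0 _ h2
        exact derivation_eq_zero_of_iterate E 3 h3 x
  -- Phase 2: one tail entry in V, at least m-d of the others in bracketSpan
  have P2 : ∀ d, d ≤ m → ∀ (w : Fin (m + 1) → A) (i₀ : Fin (m + 1)), w i₀ ∈ V →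
      ∀ s : Finset (Fin (m + 1)), i₀ ∉ s → m - d ≤ s.card →
      (∀ i ∈ s, w i ∈ bracketSpan F A ω) → ∀ x : A, ω (Fin.cons x w) = 0 := by
    intro d
    induction d with
    | zero =>
      intro _ w i₀ hi₀V s hi₀s hcard hsB x
      have hwB : ∀ i, w i ∈ bracketSpan F A ω := by
        intro i
        by_cases hi : i = i₀
        · subst hi; exact hVle hi₀V
        · apply hsB
          by_contra his
          have h1 : i₀ ∉ insert i s := by
            rw [Finset.mem_insert]
            push_neg
            exact ⟨fun h => hi h.symm, hi₀s⟩
          have hc := Finset.card_le_univ (insert i₀ (insert i s))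
          rw [Finset.card_insert_of_notMem h1, Finset.card_insert_of_notMem his,
            Fintype.card_fin] at hc
          omega
      refine P1 m le_rfl w hwB {i₀} (by simp) ?_ x
      intro i hi
      rw [Finset.mem_singleton] at hi
      subst hi
      exact hi₀V
    | succ d ih =>
      intro hd w i₀ hi₀V s hi₀s hcard hsB x
      by_cases hbig : m - d ≤ s.card
      · exact ih (by omega) w i₀ hi₀V s hi₀s hbig hsB x
      · obtain ⟨i₁, hi₁⟩ : ∃ i, i ∉ insert i₀ s := by
          by_contra hc
          push_neg at hc
          have hs := Finset.eq_univ_iff_forall.2 hc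
          have hcu := congrArg Finset.card hs
          rw [Finset.card_insert_of_notMem hi₀s, Finset.card_univ, Fintype.card_fin] at hcu
          omega
        have hi₁0 : i₁ ≠ i₀ := fun h => hi₁ (by simp [h])
        have hi₁s : i₁ ∉ s := fun h => hi₁ (Finset.mem_insert_of_mem h)
        set w1 := Function.update w i₁ x with hw1
        set E := delta ω hLeib w1 with hE
        have hB0 : ∀ g ∈ bracketSpan F A ω, ω (Fin.cons g w1) = 0 := by
          intro g hg
          have hle : Submodule.span F (Set.range ⇑ω) ≤ LinearMap.ker (deltaL ω w1) := by
            refine Submodule.span_le.2 ?_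
            rintro _ ⟨y, rfl⟩
            simp only [SetLike.mem_coe, LinearMap.mem_ker, deltaL_apply]
            rw [pull ω (ω y) w1 i₁]
            have hup : Function.update w1 i₁ (ω y) = Function.update w i₁ (ω y) := by
              rw [hw1, Function.update_idem]
            have hx1 : w1 i₁ = x := Function.update_self _ _ _
            rw [hup, hx1]
            have hB' : ∀ i ∈ insert i₁ s, Function.update w i₁ (ω y) i ∈ bracketSpan F A ω := by
              intro i hi
              rcases Finset.mem_insert.mp hi with rfl | his
              · rw [Function.update_self]
                exact Submodule.subset_span ⟨y, rfl⟩
              · have hne : i ≠ i₁ := fun hEq => hi₁s (hEq ▸ his)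
                simpa [Function.update_of_ne hne] using hsB i his
            have hi₀V' : Function.update w i₁ (ω y) i₀ ∈ V := by
              rw [Function.update_of_ne hi₁0.symm]
              exact hi₀V
            have hi₀s' : i₀ ∉ insert i₁ s := by
              rw [Finset.mem_insert]
              push_neg
              exact ⟨fun h => hi₁0 h.symm, hi₀s⟩
            rw [ih (by omega) (Function.update w i₁ (ω y)) i₀ hi₀V' (insert i₁ s) hi₀s'
              (by rw [Finset.card_insert_of_notMem hi₁s]; omega) hB' x, neg_zero]
          exact hle hg
        have h2 : ∀ y, (⇑E)^[2] y = 0 := by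
          intro y
          show E (E y) = 0
          exact hB0 _ (hEB w1 y)
        have hEz := derivation_eq_zero_of_iterate E 2 h2 (w i₁)
        rw [pull ω x w i₁]
        rw [show ω (Fin.cons (w i₁) (Function.update w i₁ x)) = 0 from hEz, neg_zero]
  intro u hu w
  rw [pull ω u w 0]
  have h0 : Function.update w 0 u 0 ∈ V := by simpa using hu
  rw [P2 m le_rfl (Function.update w 0 u) 0 h0 ∅ (Finset.notMem_empty 0) (by simp)
    (by intro i hi; simp at hi) (w 0), neg_zero]

end Main


/-- same hypotheses; then ω(A,…,A,U) = 0, i.e. every ideal of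
A⁽¹⁾ of derived length ≤ 3 lies in the center of the n-Lie algebra (A, ω). -/
theorem simple_nLiePoisson_solvable_ideal_central
    (F : Type*) [Field F] [CharZero F] (A : Type*) [CommRing A] [Algebra F A]
    (m : ℕ) (ω : A [⋀^Fin (m + 2)]→ₗ[F] A)
    (hJac : ∀ (x : Fin (m + 2) → A) (y : Fin (m + 1) → A),
      ω (Fin.cons (ω x) y) =
        ∑ i, ω (Function.update x i (ω (Fin.cons (x i) y))))
    (hLeib : ∀ (a b : A) (u : Fin (m + 1) → A),
      ω (Fin.cons (a * b) u) = a * ω (Fin.cons b u) + ω (Fin.cons a u) * b)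
    (hSimple : ∀ I : Ideal A,
      (∀ x ∈ I, ∀ v : Fin (m + 1) → A, ω (Fin.cons x v) ∈ I) → I = ⊥ ∨ I = ⊤)
    (U : Submodule F A) (hUle : U ≤ bracketSpan F A ω)
    (hUideal : ∀ u ∈ U, ∀ v : Fin (m + 1) → A,
      (∀ i, v i ∈ bracketSpan F A ω) → ω (Fin.cons u v) ∈ U)
    (hU3 : derived F A ω (derived F A ω (derived F A ω U)) = ⊥) :
    ∀ a : Fin (m + 1) → A, ∀ u ∈ U, ω (Fin.snoc a u) = 0 := by
  intro a u hu
  -- simplicity forces A to be trivial or reduced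
  have hnil : ∀ x ∈ nilradical A, ∀ v : Fin (m + 1) → A, ω (Fin.cons x v) ∈ nilradical A := by
    intro x hx v
    exact mem_nilradical.2 (derivation_nilpotent (delta ω hLeib v) (mem_nilradical.1 hx))
  rcases hSimple (nilradical A) hnil with hbot | htop
  swap
  · have h1 : IsNilpotent (1 : A) := mem_nilradical.1 (htop ▸ Submodule.mem_top)
    obtain ⟨k, hk⟩ := h1
    rw [one_pow] at hk
    have : Subsingleton A := subsingleton_of_zero_eq_one hk.symm
    exact Subsingleton.elim _ _
  haveI hred : IsReduced A := by
    constructor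
    intro x hx
    have h := mem_nilradical.2 hx
    rw [hbot] at h
    simpa using h
  -- generalities on `derived`
  have hder_le : ∀ V : Submodule F A, derived F A ω V ≤ bracketSpan F A ω := by
    intro V
    refine Submodule.span_le.2 ?_
    rintro x ⟨v, _, rfl⟩
    exact Submodule.subset_span ⟨v, rfl⟩
  have hder_ideal : ∀ V : Submodule F A,
      (∀ u ∈ V, ∀ v : Fin (m + 1) → A, (∀ i, v i ∈ bracketSpan F A ω) → ω (Fin.cons u v) ∈ V) →
      (∀ u ∈ derived F A ω V, ∀ v : Fin (m + 1) → A,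
        (∀ i, v i ∈ bracketSpan F A ω) → ω (Fin.cons u v) ∈ derived F A ω V) := by
    intro V hVid u hu v hvB
    have hle : Submodule.span F {x | ∃ vv : Fin (m + 2) → A, (∀ i, vv i ∈ V) ∧ ω vv = x}
        ≤ (derived F A ω V).comap (deltaL ω v) := by
      refine Submodule.span_le.2 ?_
      rintro _ ⟨vv, hvv, rfl⟩
      simp only [SetLike.mem_coe, Submodule.mem_comap, deltaL_apply]
      rw [hJac vv v]
      refine Submodule.sum_mem _ ?_
      intro i _
      refine Submodule.subset_span ⟨Function.update vv i (ω (Fin.cons (vv i) v)), ?_, rfl⟩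
      intro j
      by_cases hj : j = i
      · subst hj
        rw [Function.update_self]
        exact hVid _ (hvv j) v hvB
      · rw [Function.update_of_ne hj]
        exact hvv j
    exact hle hu
  -- the center
  set Zc : Submodule F A := ⨅ w : Fin (m + 1) → A, LinearMap.ker (deltaL ω w) with hZc
  have hZmem : ∀ z : A, z ∈ Zc ↔ ∀ w : Fin (m + 1) → A, ω (Fin.cons z w) = 0 := by
    intro z
    simp [hZc, Submodule.mem_iInf, LinearMap.mem_ker]
  have key : ∀ V : Submodule F A, V ≤ bracketSpan F A ω →
      (∀ u ∈ V, ∀ v : Fin (m + 1) → A, (∀ i, v i ∈ bracketSpan F A ω) → ω (Fin.cons u v) ∈ V) →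
      derived F A ω V ≤ Zc → V ≤ Zc := by
    intro V h1 h2 h3 u hu
    rw [hZmem]
    exact lemmaM ω hLeib V h1 h2
      (fun vv hvv w => (hZmem _).1 (h3 (Submodule.subset_span ⟨vv, hvv, rfl⟩)) w) u hu
  have hd3 : derived F A ω (derived F A ω (derived F A ω U)) ≤ Zc := by
    rw [hU3]; exact bot_le
  have hd2 := key _ (hder_le _) (hder_ideal _ (hder_ideal _ hUideal)) hd3
  have hd1 := key _ (hder_le _) (hder_ideal _ hUideal) hd2
  have hd0 := key U hUle hUideal hd1
  have hu' := (hZmem u).1 (hd0 hu)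
  set y : Fin (m + 2) → A := Fin.snoc a u with hydef
  have hy : ω y = ω (Fin.cons (y 0) (Fin.tail y)) := by
    rw [Fin.cons_self_tail]
  rw [hy, pull ω _ _ (Fin.last m)]
  have ht : Fin.tail y (Fin.last m) = u := by
    show y (Fin.last m).succ = u
    rw [Fin.succ_last, hydef, Fin.snoc_last]
  rw [ht, hu' _, neg_zero]
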